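/- Let t = Σ_{i=0}^{mn-1} g^i x^{n-1} in the Radford Hopf algebra R = R_{mn}(q), and let χ : R → k be the algebra homomorphism (character) determined by χ(g) = q^{-1} and χ(x) = 0. Then for every h ∈ R one has t·h = χ(h)·t. (Equivalently, the distinguished grouplike element of R* is the character α^{-m} = χ.) -/

import Mathlib

open scoped TensorProduct

/-- let `t = Σ_{i=0}^{mn-1} g^i x^{n-1}` in the Radford Hopf algebra
`R = R_{mn}(q)` and let `χ : R → K` be the algebra homomorphism determined by
`χ(g) = q⁻¹`, `χ(x) = 0` (the distinguished grouplike element `α^{-m}` of `R*`).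
Then `t·h = χ(h)·t` for every `h ∈ R`. -/
theorem radford_distinguished_grouplike_dual (K : Type*) [Field K] [IsAlgClosed K]
    (m n : ℕ) (hm : 2 ≤ m) (hn : 1 ≤ n) (hchar : ¬ (ringChar K ∣ m * n))
    (q : K) (hq : IsPrimitiveRoot q n)
    (R : Type*) [Ring R] [HopfAlgebra K R] (g x : R)
    (hgo : g ^ (m * n) = 1) (hxn : x ^ n = g ^ n - 1) (hxg : x * g = q • (g * x))
    (B : Module.Basis (Fin (m * n) × Fin n) K R)
    (hB : ∀ p : Fin (m * n) × Fin n, B p = g ^ (p.1 : ℕ) * x ^ (p.2 : ℕ))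
    (hcg : Coalgebra.comul (R := K) g = g ⊗ₜ[K] g)
    (hcx : Coalgebra.comul (R := K) x = x ⊗ₜ[K] g + 1 ⊗ₜ[K] x)
    (heg : Coalgebra.counit (R := K) g = (1 : K))
    (hex : Coalgebra.counit (R := K) x = (0 : K))
    (χ : R →ₐ[K] K) (hχg : χ g = q⁻¹) (hχx : χ x = 0) :
    ∀ h : R, (∑ i ∈ Finset.range (m * n), g ^ i * x ^ (n - 1)) * h =
      χ h • (∑ i ∈ Finset.range (m * n), g ^ i * x ^ (n - 1)) := by
  have hqn : q ^ n = 1 := hq.pow_eq_one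
  set G : R := ∑ i ∈ Finset.range (m * n), g ^ i with hG
  set t : R := ∑ i ∈ Finset.range (m * n), g ^ i * x ^ (n - 1) with ht
  have htG : t = G * x ^ (n - 1) := by rw [ht, hG, Finset.sum_mul]
  -- G * g = G
  have hGg : G * g = G := by
    have e1 := Finset.sum_range_succ (fun i => g ^ i) (m * n)
    have e2 := Finset.sum_range_succ' (fun i => g ^ i) (m * n)
    have e3 : (∑ i ∈ Finset.range (m * n), g ^ (i + 1)) + g ^ 0
        = (∑ i ∈ Finset.range (m * n), g ^ i) + g ^ (m * n) := by
      rw [← e2, e1]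
    rw [hgo, pow_zero] at e3
    have e4 : (∑ i ∈ Finset.range (m * n), g ^ (i + 1)) = ∑ i ∈ Finset.range (m * n), g ^ i :=
      add_right_cancel e3
    calc G * g = ∑ i ∈ Finset.range (m * n), g ^ i * g := by rw [hG, Finset.sum_mul]
    _ = ∑ i ∈ Finset.range (m * n), g ^ (i + 1) := by simp [pow_succ]
    _ = G := e4
  have hGgk : ∀ k : ℕ, G * g ^ k = G := by
    intro k
    induction k with
    | zero => simp
    | succ k ih => rw [pow_succ, ← mul_assoc, ih, hGg]
  -- commutation
  have comm1 : ∀ i : ℕ, x * g ^ i = q ^ i • (g ^ i * x) := by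
    intro i
    induction i with
    | zero => simp
    | succ i ih =>
      calc x * g ^ (i + 1) = (x * g ^ i) * g := by rw [pow_succ, mul_assoc]
      _ = q ^ i • (g ^ i * (x * g)) := by rw [ih, smul_mul_assoc, mul_assoc]
      _ = q ^ i • (g ^ i * (q • (g * x))) := by rw [hxg]
      _ = q ^ (i + 1) • (g ^ (i + 1) * x) := by
          rw [mul_smul_comm, smul_smul]
          congr 1
          · rw [pow_succ]
          · rw [pow_succ, mul_assoc]
  have comm : ∀ i j : ℕ, x ^ j * g ^ i = q ^ (i * j) • (g ^ i * x ^ j) := by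
    intro i j
    induction j with
    | zero => simp
    | succ j ih =>
      calc x ^ (j + 1) * g ^ i = x ^ j * (x * g ^ i) := by
            rw [pow_succ, mul_assoc]
      _ = q ^ i • (x ^ j * g ^ i * x) := by
            rw [comm1, mul_smul_comm, mul_assoc]
      _ = q ^ i • (q ^ (i * j) • (g ^ i * x ^ j * x)) := by rw [ih, smul_mul_assoc]
      _ = q ^ (i * (j + 1)) • (g ^ i * x ^ (j + 1)) := by
            rw [smul_smul, ← pow_add, mul_assoc, ← pow_succ]
            ring_nf
  -- t * x^b = 0 for b ≥ 1
  have hGxn : G * x ^ n = 0 := by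
    rw [hxn, mul_sub, hGgk n, mul_one, sub_self]
  -- key on basis elements
  have key : ∀ a b : ℕ, t * (g ^ a * x ^ b) = χ (g ^ a * x ^ b) • t := by
    intro a b
    have lhs : t * (g ^ a * x ^ b) = q ^ (a * (n - 1)) • (G * x ^ (n - 1 + b)) := by
      calc t * (g ^ a * x ^ b) = G * (x ^ (n - 1) * g ^ a) * x ^ b := by
            rw [htG]; noncomm_ring
      _ = q ^ (a * (n - 1)) • (G * g ^ a * x ^ (n - 1) * x ^ b) := by
            rw [comm, mul_smul_comm, smul_mul_assoc, ← mul_assoc]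
      _ = q ^ (a * (n - 1)) • (G * x ^ (n - 1 + b)) := by
            rw [hGgk, mul_assoc, ← pow_add]
    rcases Nat.eq_zero_or_pos b with hb | hb
    · subst hb
      rw [lhs]
      have hχ : χ (g ^ a * x ^ 0) = (q⁻¹) ^ a := by
        simp [map_mul, map_pow, hχg]
      rw [hχ]
      simp only [Nat.add_zero, ← htG]
      congr 1
      have hqa : q ^ (a * (n - 1)) * q ^ a = 1 := by
        rw [← pow_add]
        have hsub : n - 1 + 1 = n := Nat.succ_pred_eq_of_pos hn
        have : a * (n - 1) + a = n * a := by
          calc a * (n - 1) + a = a * ((n - 1) + 1) := by ring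
          _ = n * a := by rw [hsub, mul_comm]
        rw [this, pow_mul, hqn, one_pow]
      rw [inv_pow]
      exact eq_inv_of_mul_eq_one_left hqa
    · have hsplit : n - 1 + b = n + (b - 1) := by omega
      have lz : G * x ^ (n - 1 + b) = 0 := by
        rw [hsplit, pow_add, ← mul_assoc, hGxn, zero_mul]
      have hχ : χ (g ^ a * x ^ b) = 0 := by
        rw [map_mul, map_pow, map_pow, hχx, zero_pow (by omega : b ≠ 0), mul_zero]
      rw [lhs, lz, smul_zero, hχ, zero_smul]
  -- linear maps agree on basis
  have main : (LinearMap.mulLeft K t) = χ.toLinearMap.smulRight t := by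
    refine B.ext fun p => ?_
    simp only [LinearMap.mulLeft_apply, LinearMap.smulRight_apply,
      AlgHom.toLinearMap_apply, hB p]
    exact key _ _
  intro h
  have := DFunLike.congr_fun main h
  simpa using this
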